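/- arXiv:0904.4862 — 2 statements merged into one kernel-verified Lean document; each statement's English description precedes it below -/
import Mathlib

section
/- For integers n, p ≥ 1 and 0 ≤ k < n−1, 0 ≤ l ≤ p (with all relevant arguments in range), the superadditivity inequality S(n+p, k+l−1) ≤ S(n,k) + S(p,l) holds, where S(m,j) = −Σ_{t=0}^j log(1 − t/m). -/
/-!
Write `S(m, j) = ∑_{t ≤ j} -log (1 - t/m)`. The terms increase with `t/m`, and the ratio `t/(n+p)`
is a mediant of `t₁/n` and `t₂/p` whenever `t = t₁ + t₂`, hence at most the larger of the two.
So the `k + l + 1` terms of `S(n + p, k + l)` can be matched, from the largest down, with distinct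
terms of `S(n, k)` and `S(p, l)` that dominate them: this gives
`S(n + p, k + l) ≤ S(n, k) + S(p, l)`, and `S(n + p, ·)` is monotone.
-/

open Finset Real

noncomputable def negLogSum (m j : ℕ) : ℝ :=
  ∑ t ∈ range (j + 1), -log (1 - (t : ℝ) / m)

lemma negLogSum_zero (m : ℕ) : negLogSum m 0 = 0 := by
  simp [negLogSum]

lemma negLogSum_succ (m j : ℕ) :
    negLogSum m (j + 1) = negLogSum m j + -log (1 - ((j + 1 : ℕ) : ℝ) / m) :=
  sum_range_succ _ _

lemma neg_log_one_sub_le {x y : ℝ} (hxy : x ≤ y) (hy : y < 1) :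
    -log (1 - x) ≤ -log (1 - y) :=
  neg_le_neg (log_le_log (by linarith) (by linarith))

lemma natCast_div_lt_one {t m : ℕ} (h : t < m) : (t : ℝ) / m < 1 :=
  (div_lt_one (by exact_mod_cast (Nat.zero_le t).trans_lt h)).mpr (by exact_mod_cast h)

lemma neg_log_one_sub_div_nonneg {t m : ℕ} (h : t < m) : 0 ≤ -log (1 - (t : ℝ) / m) := by
  simpa using neg_log_one_sub_le (by positivity : (0 : ℝ) ≤ t / m) (natCast_div_lt_one h)

lemma negLogSum_mono {m j j' : ℕ} (hj : j ≤ j') (hj' : j' < m) :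
    negLogSum m j ≤ negLogSum m j' :=
  sum_le_sum_of_subset_of_nonneg (range_subset_range.mpr (by omega)) fun t ht _ ↦
    neg_log_one_sub_div_nonneg (by simp at ht; omega)

lemma negLogSum_anti_left {q r j : ℕ} (hrq : r ≤ q) (hj : j < r) :
    negLogSum q j ≤ negLogSum r j := by
  refine sum_le_sum fun t ht ↦ neg_log_one_sub_le ?_ (natCast_div_lt_one (by simp at ht; omega))
  exact div_le_div_of_nonneg_left (Nat.cast_nonneg t) (by exact_mod_cast (by omega : 0 < r))
    (by exact_mod_cast hrq)

lemma add_div_add_le_max {a b c d : ℝ} (hc : 0 < c) (hd : 0 < d) :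
    (a + b) / (c + d) ≤ max (a / c) (b / d) := by
  have ha : a ≤ max (a / c) (b / d) * c := (div_le_iff₀ hc).mp (le_max_left _ _)
  have hb : b ≤ max (a / c) (b / d) * d := (div_le_iff₀ hd).mp (le_max_right _ _)
  rw [div_le_iff₀ (add_pos hc hd)]
  linarith

theorem negLogSum_add_le {n p k l : ℕ} (hk : k < n) (hl : l < p) :
    negLogSum (n + p) (k + l) ≤ negLogSum n k + negLogSum p l := by
  induction k generalizing l with
  | zero => simpa [negLogSum_zero] using negLogSum_anti_left (by omega : p ≤ n + p) hl
  | succ k ihk =>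
    induction l with
    | zero => simpa [negLogSum_zero] using negLogSum_anti_left (by omega : n ≤ n + p) hk
    | succ l ihl =>
      have hmediant : ((k + 1 + (l + 1) : ℕ) : ℝ) / (n + p : ℕ) ≤
          max (((k + 1 : ℕ) : ℝ) / n) (((l + 1 : ℕ) : ℝ) / p) := by
        push_cast
        exact add_div_add_le_max (by exact_mod_cast (by omega : 0 < n))
          (by exact_mod_cast (by omega : 0 < p))
      rcases le_max_iff.mp hmediant with hle | hle
      · rw [show k + 1 + (l + 1) = k + (l + 1) + 1 by omega] at hle ⊢
        rw [negLogSum_succ, negLogSum_succ n k]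
        linarith [ihk (l := l + 1) (by omega) hl, neg_log_one_sub_le hle (natCast_div_lt_one hk)]
      · rw [show k + 1 + (l + 1) = k + 1 + l + 1 by omega] at hle ⊢
        rw [negLogSum_succ, negLogSum_succ p l]
        linarith [ihl (by omega), neg_log_one_sub_le hle (natCast_div_lt_one hl)]

theorem stmt_8_general (n p k l : ℕ)
    (hk : k < n) (hl : l < p)
    (S : ℕ → ℕ → ℝ)
    (hS : ∀ m j, S m j = -∑ t ∈ Finset.range (j + 1), Real.log (1 - (t : ℝ) / m)) :
    S (n + p) (k + l - 1) ≤ S n k + S p l := by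
  have hS' : S = negLogSum := by
    ext m j
    rw [hS, negLogSum, ← sum_neg_distrib]
  rw [hS']
  calc negLogSum (n + p) (k + l - 1)
      ≤ negLogSum (n + p) (k + l) := negLogSum_mono (Nat.sub_le _ _) (by omega)
    _ ≤ negLogSum n k + negLogSum p l := negLogSum_add_le hk hl

/-- Superadditivity: S(n+p, k+l−1) ≤ S(n,k) + S(p,l). -/
theorem stmt_8 (n p k l : ℕ) (hn : 1 ≤ n) (hp : 1 ≤ p)
    (hk : k < n) (hl1 : 1 ≤ l) (hl : l < p)
    (S : ℕ → ℕ → ℝ)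
    (hS : ∀ m j, S m j = -∑ t ∈ Finset.range (j + 1), Real.log (1 - (t : ℝ) / m)) :
    S (n + p) (k + l - 1) ≤ S n k + S p l :=
  stmt_8_general n p k l hk hl S hS
end

section
/- For integers n ≥ 1, p ≥ 1, 0 ≤ k ≤ n − 3, and 1 ≤ l ≤ p with k + l ≤ n + p − 1, the ratio h(l) = ∏_{t=1}^k (1 − t/n) · ∏_{t=1}^{l−1} (1 − t/p) / ∏_{t=1}^{k+l} (1 − t/(n+p)) satisfies h(l) ≤ n² / ((n−k−1)(n−k−2)). -/
/-!
Write `S(m, j) = -log ∏_{t=1}^{j} (1 - t/m)`; the bound amounts to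
`S(n+p, k+l) ≤ S(n, k+2) + S(p, l-1)`. Let `Φ_m(x) = (m-x) log((m-x)/m) + x = ∫₀ˣ -log(1 - s/m) ds`.
As the integrand is increasing, `Φ_m(j) ≤ S(m, j) ≤ Φ_m(j+1) - Φ_m(1)`, and by the log-sum
inequality `Φ` is subadditive: `Φ_{n+p}(a+b) ≤ Φ_n(a) + Φ_p(b)`. Hence
`S(n+p, k+l) ≤ Φ_{n+p}(k+l+1) ≤ Φ_n(k+2) + Φ_p(l-1) ≤ S(n, k+2) + S(p, l-1)`.
-/

open Real Finset

lemma sub_le_mul_log_sub_log {a b : ℝ} (ha : 0 ≤ a) (hb : 0 < b) :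
    a - b ≤ a * (log a - log b) := by
  rcases ha.eq_or_lt with rfl | ha
  · simpa using hb.le
  have h := one_sub_inv_le_log_of_pos (div_pos ha hb)
  rw [inv_div, log_div ha.ne' hb.ne'] at h
  calc a - b = a * (1 - b / a) := by field_simp
    _ ≤ a * (log a - log b) := by gcongr

/-- The log-sum inequality for two terms. -/
lemma add_mul_log_div_add_le {u v n p : ℝ} (hu : 0 ≤ u) (hv : 0 ≤ v) (hn : 0 < n) (hp : 0 < p) :
    (u + v) * log ((u + v) / (n + p)) ≤ u * log (u / n) + v * log (v / p) := by
  have hnp : 0 < n + p := by positivity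
  have h := convexOn_mul_log.2 (Set.mem_Ici.2 (div_nonneg hu hn.le))
    (Set.mem_Ici.2 (div_nonneg hv hp.le)) (div_pos hn hnp).le (div_pos hp hnp).le
    (by field_simp)
  simp only [smul_eq_mul] at h
  have hmid : n / (n + p) * (u / n) + p / (n + p) * (v / p) = (u + v) / (n + p) := by
    field_simp
  rw [hmid] at h
  calc (u + v) * log ((u + v) / (n + p))
        = (n + p) * ((u + v) / (n + p) * log ((u + v) / (n + p))) := by field_simp
    _ ≤ (n + p) * (n / (n + p) * (u / n * log (u / n)) + p / (n + p) * (v / p * log (v / p))) := by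
        gcongr
    _ = u * log (u / n) + v * log (v / p) := by field_simp

noncomputable def negLogIntegral (m x : ℝ) : ℝ := (m - x) * log ((m - x) / m) + x

lemma negLogIntegral_zero (m : ℝ) : negLogIntegral m 0 = 0 := by
  rcases eq_or_ne m 0 with rfl | hm <;> simp [negLogIntegral, *]

lemma negLogIntegral_add_le {n p a b : ℝ} (hn : 0 < n) (hp : 0 < p) (ha : a ≤ n) (hb : b ≤ p) :
    negLogIntegral (n + p) (a + b) ≤ negLogIntegral n a + negLogIntegral p b := by
  have h := add_mul_log_div_add_le (sub_nonneg.2 ha) (sub_nonneg.2 hb) hn hp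
  unfold negLogIntegral
  rw [show n + p - (a + b) = n - a + (p - b) by ring]
  linarith

lemma neg_log_le_negLogIntegral_succ_sub {m t : ℝ} (hm : 0 < m) (ht : t + 1 ≤ m) :
    -log (1 - t / m) ≤ negLogIntegral m (t + 1) - negLogIntegral m t := by
  have key := sub_le_mul_log_sub_log (a := (m - (t + 1)) / m) (b := (m - t) / m)
    (div_nonneg (by linarith) hm.le) (div_pos (by linarith) hm)
  have key' := mul_le_mul_of_nonneg_left key hm.le
  rw [one_sub_div hm.ne']
  unfold negLogIntegral
  field_simp at key'
  linarith

lemma negLogIntegral_succ_sub_le_neg_log {m t : ℝ} (hm : 0 < m) (ht : t + 1 < m) :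
    negLogIntegral m (t + 1) - negLogIntegral m t ≤ -log (1 - (t + 1) / m) := by
  have key := sub_le_mul_log_sub_log (a := (m - t) / m) (b := (m - (t + 1)) / m)
    (div_nonneg (by linarith) hm.le) (div_pos (by linarith) hm)
  have key' := mul_le_mul_of_nonneg_left key hm.le
  rw [one_sub_div hm.ne']
  unfold negLogIntegral
  field_simp at key'
  linarith

noncomputable def descProd (m : ℝ) (j : ℕ) : ℝ := ∏ t ∈ Icc 1 j, (1 - (t : ℝ) / m)

lemma one_sub_div_pos_of_lt {m t : ℝ} (ht : t < m) (ht0 : 0 ≤ t) : 0 < 1 - t / m := by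
  rw [sub_pos, div_lt_one (by linarith)]
  exact ht

lemma descProd_pos {m : ℝ} {j : ℕ} (hj : (j : ℝ) < m) : 0 < descProd m j :=
  prod_pos fun t ht => one_sub_div_pos_of_lt
    (lt_of_le_of_lt (by exact_mod_cast (mem_Icc.1 ht).2) hj) t.cast_nonneg

lemma neg_log_descProd {m : ℝ} {j : ℕ} (hj : (j : ℝ) < m) :
    -log (descProd m j) = ∑ i ∈ range j, -log (1 - ((i : ℝ) + 1) / m) := by
  rw [descProd, log_prod fun t ht => (one_sub_div_pos_of_lt
    (lt_of_le_of_lt (by exact_mod_cast (mem_Icc.1 ht).2) hj) t.cast_nonneg).ne',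
    ← sum_neg_distrib, ← Ico_add_one_right_eq_Icc, range_eq_Ico]
  simpa using (sum_Ico_add' (fun t : ℕ => -log (1 - (t : ℝ) / m)) 0 j 1).symm

lemma neg_log_descProd_le {m : ℝ} {j : ℕ} (hj : (j : ℝ) + 1 ≤ m) :
    -log (descProd m j) ≤ negLogIntegral m (j + 1) - negLogIntegral m 1 := by
  have hm : 0 < m := by linarith [j.cast_nonneg (α := ℝ)]
  rw [neg_log_descProd (by linarith)]
  calc ∑ i ∈ range j, -log (1 - ((i : ℝ) + 1) / m)
      ≤ ∑ i ∈ range j, (negLogIntegral m ((i + 1 : ℕ) + 1) - negLogIntegral m ((i : ℕ) + 1)) := by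
        refine sum_le_sum fun i hi => ?_
        have hi : (i : ℝ) + 1 ≤ j := by exact_mod_cast mem_range.1 hi
        push_cast
        exact neg_log_le_negLogIntegral_succ_sub hm (by linarith)
    _ = negLogIntegral m (j + 1) - negLogIntegral m 1 := by
        rw [sum_range_sub (fun i : ℕ => negLogIntegral m ((i : ℝ) + 1))]
        simp

lemma negLogIntegral_le_neg_log_descProd {m : ℝ} {j : ℕ} (hj : (j : ℝ) < m) :
    negLogIntegral m j ≤ -log (descProd m j) := by
  have hm : 0 < m := by linarith [j.cast_nonneg (α := ℝ)]
  rw [neg_log_descProd hj]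
  calc negLogIntegral m j
      = ∑ i ∈ range j, (negLogIntegral m ((i + 1 : ℕ) : ℝ) - negLogIntegral m (i : ℕ)) := by
        rw [sum_range_sub (fun i : ℕ => negLogIntegral m i)]
        simp [negLogIntegral_zero]
    _ ≤ ∑ i ∈ range j, -log (1 - ((i : ℝ) + 1) / m) := by
        refine sum_le_sum fun i hi => ?_
        have hi : (i : ℝ) + 1 ≤ j := by exact_mod_cast mem_range.1 hi
        push_cast
        exact negLogIntegral_succ_sub_le_neg_log hm (by linarith)

lemma descProd_mul_descProd_le {n p : ℝ} {a b : ℕ} (ha : (a : ℝ) + 2 ≤ n) (hb : (b : ℝ) + 1 ≤ p) :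
    descProd n (a + 1) * descProd p b ≤ descProd (n + p) (a + b) := by
  have hn : 0 < n := by linarith [a.cast_nonneg (α := ℝ)]
  have hp : 0 < p := by linarith [b.cast_nonneg (α := ℝ)]
  have hnp : ((a + b : ℕ) : ℝ) + 1 ≤ n + p := by push_cast; linarith
  have hA := negLogIntegral_le_neg_log_descProd (m := n) (j := a + 1) (by push_cast; linarith)
  have hB := negLogIntegral_le_neg_log_descProd (m := p) (j := b) (by linarith)
  have hC := neg_log_descProd_le hnp
  have hsub := negLogIntegral_add_le hn hp (a := a + 1) (b := b) (by linarith) (by linarith)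
  have hone : 0 ≤ negLogIntegral (n + p) 1 := by
    simpa [negLogIntegral_zero] using
      neg_log_le_negLogIntegral_succ_sub (t := 0) (by positivity) (by linarith)
  have hA_pos : 0 < descProd n (a + 1) := descProd_pos (by push_cast; linarith)
  have hB_pos : 0 < descProd p b := descProd_pos (by linarith)
  rw [← log_le_log_iff (mul_pos hA_pos hB_pos) (descProd_pos (by linarith)),
    log_mul hA_pos.ne' hB_pos.ne']
  push_cast at hA hC
  rw [show (a : ℝ) + b + 1 = a + 1 + b by ring] at hC
  linarith

theorem stmt_13_general (n p k l : ℕ)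
    (hk : k + 3 ≤ n) (hl1 : 1 ≤ l) (hlp : l ≤ p) :
    (∏ t ∈ Finset.Icc 1 k, (1 - (t : ℝ) / n)) *
        (∏ t ∈ Finset.Icc 1 (l - 1), (1 - (t : ℝ) / p)) /
        (∏ t ∈ Finset.Icc 1 (k + l), (1 - (t : ℝ) / (n + p))) ≤
      (n : ℝ) ^ 2 / (((n : ℝ) - k - 1) * ((n : ℝ) - k - 2)) := by
  change descProd n k * descProd p (l - 1) / descProd (n + p) (k + l) ≤ _
  have hk' : (k : ℝ) + 3 ≤ n := by exact_mod_cast hk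
  have hl' : ((l - 1 : ℕ) : ℝ) + 1 ≤ p := by
    rw [Nat.cast_sub hl1, Nat.cast_one, sub_add_cancel]
    exact_mod_cast hlp
  have hn : (0 : ℝ) < n := by linarith [k.cast_nonneg (α := ℝ)]
  have hsplit : descProd n (k + 2) = descProd n k * ((1 - (k + 1) / n) * (1 - (k + 2) / n)) := by
    simp only [descProd, prod_Icc_succ_top (show 1 ≤ k + 1 + 1 by omega),
      prod_Icc_succ_top (show 1 ≤ k + 1 by omega)]
    push_cast; ring
  have hkey := descProd_mul_descProd_le (n := n) (a := k + 1) (by push_cast; linarith) hl'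
  rw [show k + 1 + 1 = k + 2 by rfl, hsplit, show k + 1 + (l - 1) = k + l by omega] at hkey
  have hA := descProd_pos (m := n) (j := k) (by linarith)
  have hB := descProd_pos (m := p) (j := l - 1) (by linarith)
  have h1 : 0 < 1 - ((k : ℝ) + 1) / n := one_sub_div_pos_of_lt (by linarith) (by positivity)
  have h2 : 0 < 1 - ((k : ℝ) + 2) / n := one_sub_div_pos_of_lt (by linarith) (by positivity)
  calc descProd n k * descProd p (l - 1) / descProd (n + p) (k + l)
      ≤ descProd n k * descProd p (l - 1) /
          (descProd n k * ((1 - (k + 1) / n) * (1 - (k + 2) / n)) * descProd p (l - 1)) :=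
        div_le_div_of_nonneg_left (by positivity) (by positivity) hkey
    _ = (n : ℝ) ^ 2 / (((n : ℝ) - k - 1) * ((n : ℝ) - k - 2)) := by
        field_simp
        ring

/-- h(l) ≤ n²/((n−k−1)(n−k−2)). -/
theorem stmt_13 (n p k l : ℕ) (hn : 1 ≤ n) (hp : 1 ≤ p)
    (hk : k + 3 ≤ n) (hl1 : 1 ≤ l) (hlp : l ≤ p) (hkl : k + l ≤ n + p - 1) :
    (∏ t ∈ Finset.Icc 1 k, (1 - (t : ℝ) / n)) *
        (∏ t ∈ Finset.Icc 1 (l - 1), (1 - (t : ℝ) / p)) /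
        (∏ t ∈ Finset.Icc 1 (k + l), (1 - (t : ℝ) / (n + p))) ≤
      (n : ℝ) ^ 2 / (((n : ℝ) - k - 1) * ((n : ℝ) - k - 2)) :=
  stmt_13_general n p k l hk hl1 hlp
end
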